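/- With thresholds and constants as in Algorithm 2, for any m ∈ {1,...,L}, any p > T_m and any integer z with 0 ≤ z < m: p·α_m + (1−p)·α_{-m} > p·α_z + (1−p)·α_{-z}. Symmetrically, for any m ∈ {0,...,L−1}, any p < T_{m+1} and any z with m < z ≤ L: p·α_m + (1−p)·α_{-m} > p·α_z + (1−p)·α_{-z}. -/

import Mathlib

/-- The pair (α_{L−k}, α_{−(L−k)}) of constants of Algorithm 2, computed by downward
recursion from level L. -/
noncomputable def alphaPair (L : ℕ) (S T : ℕ → ℝ) : ℕ → ℝ × ℝ
  | 0 => (1 / S L, 0)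
  | k + 1 =>
      let p := alphaPair L S T k
      let l := L - (k + 1)
      let a := ((1 - S l) * T (l + 1) * p.1 + (1 - S l) * (1 - T (l + 1)) * p.2
                  - (1 - T (l + 1))) / (T (l + 1) - S l)
      (a, (1 - S l * a) / (1 - S l))

/-- The constants α_z, z ∈ {−L,…,L}, of Algorithm 2 (α_0 = 1). -/
noncomputable def alphaC (L : ℕ) (S T : ℕ → ℝ) (z : ℤ) : ℝ :=
  if z = 0 then 1
  else if 0 < z then (alphaPair L S T (L - z.toNat)).1
  else (alphaPair L S T (L - (-z).toNat)).2

/-!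
For fixed level `l`, `p ↦ p α_l + (1 - p) α_{-l}` is an affine "score line" of slope
`α_l - α_{-l}`. Level `0` is the constant line `1`, level `L` is the line through `(0, 0)` and
`(S L, 1)`, and the recursion of Algorithm 2 makes level `l` the line through `(S l, 1)` that meets
the level-`(l+1)` line at `p = T (l+1)`. As `S l < S (l+1) < T (l+1)`, downward induction shows that
the slopes are positive and strictly increase with the level. So consecutive scores differ by
`(p - T (l+1))` times a positive number: for fixed `p` the score increases with the level while
`T (l+1) < p` and decreases once `p < T (l+1)`, and monotonicity of `T` gives both claims.
-/

open Set

structure AdmissibleThresholds (L : ℕ) (S T : ℕ → ℝ) : Prop where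
  S_mem_Ioo : ∀ l ∈ Icc 1 L, S l ∈ Ioo 0 1
  S_lt_succ : ∀ l, 1 ≤ l → l < L → S l < S (l + 1)
  S_lt_T : ∀ l, 2 ≤ l → l ≤ L → S l < T l
  T_one : T 1 = S 1

noncomputable def levelScore (L : ℕ) (S T : ℕ → ℝ) (l : ℕ) (p : ℝ) : ℝ :=
  p * alphaC L S T l + (1 - p) * alphaC L S T (-(l : ℤ))

noncomputable def levelSlope (L : ℕ) (S T : ℕ → ℝ) (l : ℕ) : ℝ :=
  alphaC L S T l - alphaC L S T (-(l : ℤ))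

section

variable {L : ℕ} {S T : ℕ → ℝ}

lemma levelScore_sub_levelScore (l : ℕ) (p q : ℝ) :
    levelScore L S T l p - levelScore L S T l q = (p - q) * levelSlope L S T l := by
  unfold levelScore levelSlope
  ring

lemma levelScore_zero (p : ℝ) : levelScore L S T 0 p = 1 := by
  simp [levelScore, alphaC]

lemma levelSlope_zero : levelSlope L S T 0 = 0 := by
  simp [levelSlope, alphaC]

lemma alphaC_natCast {l : ℕ} (hl : 0 < l) :
    alphaC L S T l = (alphaPair L S T (L - l)).1 := by
  simp [alphaC, hl.ne']

lemma alphaC_neg_natCast {l : ℕ} (hl : 0 < l) :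
    alphaC L S T (-(l : ℤ)) = (alphaPair L S T (L - l)).2 := by
  simp [alphaC, hl.ne']

lemma alphaC_of_lt {l : ℕ} (hl : 0 < l) (hlL : l < L) :
    alphaC L S T l = ((1 - S l) * T (l + 1) * alphaC L S T (l + 1 : ℕ)
        + (1 - S l) * (1 - T (l + 1)) * alphaC L S T (-((l + 1 : ℕ) : ℤ))
        - (1 - T (l + 1))) / (T (l + 1) - S l) ∧
      alphaC L S T (-(l : ℤ)) = (1 - S l * alphaC L S T l) / (1 - S l) := by
  obtain ⟨k, hk⟩ : ∃ k, L - l = k + 1 := ⟨L - (l + 1), by omega⟩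
  have hlk : L - (k + 1) = l := by omega
  have hk' : L - (l + 1) = k := by omega
  simp only [alphaC_natCast hl, alphaC_neg_natCast hl, alphaC_natCast l.succ_pos,
    alphaC_neg_natCast l.succ_pos, hk, hk']
  constructor <;> simp only [alphaPair, hlk]

lemma levelScore_self_of_lt {l : ℕ} (hl : 0 < l) (hlL : l < L) (hS : S l ≠ 1) :
    levelScore L S T l (S l) = 1 := by
  have hS' : 1 - S l ≠ 0 := sub_ne_zero.mpr hS.symm
  rw [levelScore, (alphaC_of_lt hl hlL).2]
  field_simp
  ring

lemma levelScore_top (hL : 0 < L) (hS : S L ≠ 0) : levelScore L S T L (S L) = 1 := by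
  simp [levelScore, alphaC_natCast hL, alphaC_neg_natCast hL, alphaPair, hS]

lemma levelSlope_top (hL : 0 < L) : levelSlope L S T L = 1 / S L := by
  simp [levelSlope, alphaC_natCast hL, alphaC_neg_natCast hL, alphaPair]

lemma levelScore_cross_of_pos {l : ℕ} (hl : 0 < l) (hlL : l < L) (hS : S l ≠ 1)
    (hST : S l ≠ T (l + 1)) :
    levelScore L S T (l + 1) (T (l + 1)) = levelScore L S T l (T (l + 1)) := by
  have hS' : 1 - S l ≠ 0 := sub_ne_zero.mpr hS.symm
  have hST' : T (l + 1) - S l ≠ 0 := sub_ne_zero.mpr hST.symm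
  obtain ⟨hpos, hneg⟩ := alphaC_of_lt (S := S) (T := T) hl hlL
  rw [levelScore, levelScore, hneg, hpos]
  field_simp
  ring

-- Lines of slopes `σ`, `σ'` through `(s, 1)`, `(s', 1)` that meet at abscissa `t`.
lemma pos_and_lt_of_sub_mul_eq_sub_mul {s s' t σ σ' : ℝ} (hss' : s < s') (hs't : s' < t)
    (hσ' : 0 < σ') (h : (t - s) * σ = (t - s') * σ') : 0 < σ ∧ σ < σ' := by
  have hts : 0 < t - s := by linarith
  have hσ : 0 < σ := pos_of_mul_pos_right (h ▸ mul_pos (by linarith) hσ') hts.le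
  refine ⟨hσ, ?_⟩
  nlinarith

namespace AdmissibleThresholds

lemma levelScore_self {l : ℕ} (h : AdmissibleThresholds L S T) (hl : l ∈ Icc 1 L) :
    levelScore L S T l (S l) = 1 := by
  obtain ⟨hl1, hlL⟩ := hl
  rcases hlL.eq_or_lt with rfl | hlL
  · exact levelScore_top hl1 (h.S_mem_Ioo l ⟨hl1, le_rfl⟩).1.ne'
  · exact levelScore_self_of_lt hl1 hlL (h.S_mem_Ioo l ⟨hl1, hlL.le⟩).2.ne

lemma S_lt_T_succ (h : AdmissibleThresholds L S T) {l : ℕ} (hl : 0 < l) (hlL : l < L) :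
    S l < T (l + 1) :=
  (h.S_lt_succ l hl hlL).trans (h.S_lt_T (l + 1) (by omega) hlL)

lemma levelSlope_pos_and_lt_succ (h : AdmissibleThresholds L S T) {l : ℕ} (hl : 0 < l)
    (hlL : l < L) (hσ : 0 < levelSlope L S T (l + 1)) :
    0 < levelSlope L S T l ∧ levelSlope L S T l < levelSlope L S T (l + 1) := by
  have hself := h.levelScore_self ⟨hl, hlL.le⟩
  have hself' := h.levelScore_self ⟨l.succ_pos, hlL⟩
  have hcross := levelScore_cross_of_pos hl hlL (h.S_mem_Ioo l ⟨hl, hlL.le⟩).2.ne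
    (h.S_lt_T_succ hl hlL).ne
  have e := levelScore_sub_levelScore (L := L) (S := S) (T := T) l (T (l + 1)) (S l)
  have e' := levelScore_sub_levelScore (L := L) (S := S) (T := T) (l + 1) (T (l + 1)) (S (l + 1))
  refine pos_and_lt_of_sub_mul_eq_sub_mul (h.S_lt_succ l hl hlL)
    (h.S_lt_T (l + 1) (by omega) hlL) hσ ?_
  linarith

lemma levelSlope_pos (h : AdmissibleThresholds L S T) {l : ℕ} (hl : l ∈ Icc 1 L) :
    0 < levelSlope L S T l := by
  obtain ⟨hl1, hlL⟩ := hl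
  induction hlL using Nat.decreasingInduction with
  | self =>
    rw [levelSlope_top hl1]
    exact one_div_pos.mpr (h.S_mem_Ioo L ⟨hl1, le_rfl⟩).1
  | of_succ k hk ih => exact (h.levelSlope_pos_and_lt_succ hl1 hk (ih (by omega))).1

lemma levelSlope_lt_succ (h : AdmissibleThresholds L S T) {l : ℕ} (hlL : l < L) :
    levelSlope L S T l < levelSlope L S T (l + 1) := by
  have hσ := h.levelSlope_pos ⟨l.succ_pos, hlL⟩
  rcases l.eq_zero_or_pos with rfl | hl
  · rwa [levelSlope_zero]
  · exact (h.levelSlope_pos_and_lt_succ hl hlL hσ).2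

lemma levelScore_cross (h : AdmissibleThresholds L S T) {l : ℕ} (hlL : l < L) :
    levelScore L S T (l + 1) (T (l + 1)) = levelScore L S T l (T (l + 1)) := by
  rcases l.eq_zero_or_pos with rfl | hl
  · rw [levelScore_zero, h.T_one]
    exact h.levelScore_self ⟨le_rfl, hlL⟩
  · exact levelScore_cross_of_pos hl hlL (h.S_mem_Ioo l ⟨hl, hlL.le⟩).2.ne
      (h.S_lt_T_succ hl hlL).ne

lemma levelScore_succ_sub (h : AdmissibleThresholds L S T) {l : ℕ} (hlL : l < L) (p : ℝ) :
    levelScore L S T (l + 1) p - levelScore L S T l p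
      = (p - T (l + 1)) * (levelSlope L S T (l + 1) - levelSlope L S T l) := by
  linear_combination h.levelScore_cross hlL
    + levelScore_sub_levelScore (l + 1) p (T (l + 1))
    - levelScore_sub_levelScore l p (T (l + 1))

lemma levelScore_lt_succ (h : AdmissibleThresholds L S T) {l : ℕ} (hlL : l < L) {p : ℝ}
    (hp : T (l + 1) < p) : levelScore L S T l p < levelScore L S T (l + 1) p := by
  have := h.levelScore_succ_sub hlL p
  have := mul_pos (sub_pos.mpr hp) (sub_pos.mpr (h.levelSlope_lt_succ hlL))
  linarith

lemma levelScore_succ_lt (h : AdmissibleThresholds L S T) {l : ℕ} (hlL : l < L) {p : ℝ}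
    (hp : p < T (l + 1)) : levelScore L S T (l + 1) p < levelScore L S T l p := by
  have := h.levelScore_succ_sub hlL p
  have := mul_neg_of_neg_of_pos (sub_neg.mpr hp) (sub_pos.mpr (h.levelSlope_lt_succ hlL))
  linarith

end AdmissibleThresholds

end

theorem alpha_level_optimal_general
    (L : ℕ) (S T : ℕ → ℝ)
    (hS0 : 0 < S 1) (hSmono : ∀ l : ℕ, 1 ≤ l → l < L → S l < S (l + 1)) (hSL : S L < 1)
    (hTmono : ∀ l : ℕ, 1 ≤ l → l < L → T l < T (l + 1))
    (hTS1 : T 1 = S 1) (hTS : ∀ l : ℕ, 2 ≤ l → l ≤ L → S l < T l) :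
    (∀ m : ℕ, 1 ≤ m → m ≤ L → ∀ p : ℝ, T m < p → ∀ z : ℕ, z < m →
      p * alphaC L S T z + (1 - p) * alphaC L S T (-(z : ℤ))
        < p * alphaC L S T m + (1 - p) * alphaC L S T (-(m : ℤ))) ∧
    (∀ m : ℕ, m ≤ L - 1 → ∀ p : ℝ, p < T (m + 1) → ∀ z : ℕ, m < z → z ≤ L →
      p * alphaC L S T z + (1 - p) * alphaC L S T (-(z : ℤ))
        < p * alphaC L S T m + (1 - p) * alphaC L S T (-(m : ℤ))) := by
  have hSmonoOn : MonotoneOn S (Icc 1 L) :=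
    (strictMonoOn_of_lt_add_one ordConnected_Icc fun l _ hl hl' => hSmono l hl.1 hl'.2).monotoneOn
  have hTmonoOn : MonotoneOn T (Icc 1 L) :=
    (strictMonoOn_of_lt_add_one ordConnected_Icc fun l _ hl hl' => hTmono l hl.1 hl'.2).monotoneOn
  have h : AdmissibleThresholds L S T :=
    { S_mem_Ioo := fun l hl =>
        ⟨hS0.trans_le (hSmonoOn ⟨le_rfl, hl.1.trans hl.2⟩ hl hl.1),
          (hSmonoOn hl ⟨hl.1.trans hl.2, le_rfl⟩ hl.2).trans_lt hSL⟩
      S_lt_succ := hSmono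
      S_lt_T := hTS
      T_one := hTS1 }
  refine ⟨fun m hm1 hmL p hp z hz => ?_, fun m hmL p hp z hmz hzL => ?_⟩
  · have hmono : StrictMonoOn (levelScore L S T · p) (Icc z m) :=
      strictMonoOn_of_lt_add_one ordConnected_Icc fun l _ _ ⟨_, hlm⟩ =>
        h.levelScore_lt_succ (by omega)
          ((hTmonoOn ⟨by omega, by omega⟩ ⟨hm1, hmL⟩ hlm).trans_lt hp)
    exact hmono ⟨le_rfl, hz.le⟩ ⟨hz.le, le_rfl⟩ hz
  · have hanti : StrictAntiOn (levelScore L S T · p) (Icc m L) :=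
      strictAntiOn_of_add_one_lt ordConnected_Icc fun l _ ⟨hml, _⟩ ⟨_, hlL⟩ =>
        h.levelScore_succ_lt hlL
          (hp.trans_le (hTmonoOn ⟨by omega, by omega⟩ ⟨by omega, hlL⟩ (by omega)))
    exact hanti ⟨le_rfl, by omega⟩ ⟨hmz.le, hzL⟩ hmz

/-- Lemma 5: the correct confidence level uniquely maximizes the per-question
expected score p·α_m + (1−p)·α_{−m}. -/
theorem alpha_level_optimal
    (L : ℕ) (hL : 1 ≤ L) (S T : ℕ → ℝ)
    (hS0 : 0 < S 1) (hSmono : ∀ l : ℕ, 1 ≤ l → l < L → S l < S (l + 1)) (hSL : S L < 1)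
    (hT0 : 0 < T 1) (hTmono : ∀ l : ℕ, 1 ≤ l → l < L → T l < T (l + 1)) (hTL : T L < 1)
    (hTS1 : T 1 = S 1) (hTS : ∀ l : ℕ, 2 ≤ l → l ≤ L → S l < T l) :
    (∀ m : ℕ, 1 ≤ m → m ≤ L → ∀ p : ℝ, T m < p → ∀ z : ℕ, z < m →
      p * alphaC L S T z + (1 - p) * alphaC L S T (-(z : ℤ))
        < p * alphaC L S T m + (1 - p) * alphaC L S T (-(m : ℤ))) ∧
    (∀ m : ℕ, m ≤ L - 1 → ∀ p : ℝ, p < T (m + 1) → ∀ z : ℕ, m < z → z ≤ L →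
      p * alphaC L S T z + (1 - p) * alphaC L S T (-(z : ℤ))
        < p * alphaC L S T m + (1 - p) * alphaC L S T (-(m : ℤ))) :=
  alpha_level_optimal_general L S T hS0 hSmono hSL hTmono hTS1 hTS
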